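/- Every factor of the Thue–Morse word of length at least 4 occurs only at positions of a single parity: if w is a binary word of length n ≥ 4 and i, j are indices such that w(k) = t(i+k) and w(k) = t(j+k) for all k < n, then i ≡ j (mod 2). -/

import Mathlib

open Fin.NatCast in
/-- The Thue–Morse sequence: sum of binary digits of `n`, mod 2. -/
def tm (n : ℕ) : Fin 2 := ((Nat.digits 2 n).sum : Fin 2)

/-- The factor of the Thue–Morse word of length `n` starting at position `i`. -/
def tmWord (i n : ℕ) : List (Fin 2) := (List.range n).map (fun j => tm (i + j))

/-- A binary word is a factor of the Thue–Morse word. -/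
def IsFactor (w : List (Fin 2)) : Prop := ∃ i : ℕ, w = tmWord i w.length

/-- Number of occurrences of the word `x` as a factor of `u`. -/
def occCount (u x : List (Fin 2)) : ℕ :=
  ((List.range u.length).filter (fun i => (u.drop i).take x.length = x)).length

/-- Two binary words (of equal length) are 2-abelian equivalent: same first letter,
same last letter, and the same number of occurrences of every word of length 2. -/
def TwoAbelianEquiv (u v : List (Fin 2)) : Prop :=
  u.length = v.length ∧ u.take 1 = v.take 1 ∧
  u.drop (u.length - 1) = v.drop (v.length - 1) ∧
  ∀ x : List (Fin 2), x.length = 2 → occCount u x = occCount v x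

/-- `P n` is the 2-abelian complexity of the Thue–Morse word: the number of
2-abelian equivalence classes of factors of length `n`. -/
noncomputable def P (n : ℕ) : ℕ :=
  Nat.card (Quot (fun u v : {w : List (Fin 2) // w.length = n ∧ IsFactor w} =>
    TwoAbelianEquiv u.1 v.1))

/-- `pword w` counts the pairs in `w`: the total number of occurrences of `00` and `11`. -/
def pword (w : List (Fin 2)) : ℕ := occCount w [0, 0] + occCount w [1, 1]

/-- The set of possible pair counts of Thue–Morse factors of length `n`. -/
def pairs (n : ℕ) : Set ℕ :=
  { m | ∃ w : List (Fin 2), w.length = n ∧ IsFactor w ∧ pword w = m }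

/-- The set of possible pair counts of Thue–Morse factors of length `n`
occurring at some odd position (pure odd factors). -/
def PAIRS (n : ℕ) : Set ℕ := { m | ∃ i : ℕ, i % 2 = 1 ∧ pword (tmWord i n) = m }

/-! Since `tm (2m) = tm m` and `tm (2m+1) = tm m + 1`, the letters at positions `2m` and `2m+1`
always differ, so a factor `abcd` occurring at an even position has `a ≠ b` and `c ≠ d`. At an
odd position `2m+1`, halving the positions turns `a ≠ b` and `c ≠ d` into
`tm m = tm (m+1) = tm (m+2)`: three equal consecutive letters, impossible because one of the two
pairs starts at an even position. -/

lemma fin_two_ne_add_one_iff (a b : Fin 2) : a ≠ b + 1 ↔ a = b := by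
  decide +revert

lemma tm_two_mul (n : ℕ) : tm (2 * n) = tm n := by
  rcases Nat.eq_zero_or_pos n with rfl | hn
  · rfl
  · unfold tm
    rw [Nat.digits_def' (by norm_num) (by omega)]
    simp

open Fin.NatCast in
lemma tm_two_mul_add_one (n : ℕ) : tm (2 * n + 1) = tm n + 1 := by
  unfold tm
  rw [Nat.digits_def' (by norm_num) (by omega), Nat.mul_add_mod_self_left,
    Nat.mul_add_div (by norm_num)]
  push_cast
  exact add_comm _ _

lemma tm_add_one_ne_of_even {k : ℕ} (hk : Even k) : tm (k + 1) ≠ tm k := by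
  obtain ⟨m, rfl⟩ := hk
  rw [← two_mul, tm_two_mul_add_one, tm_two_mul, ne_eq, add_eq_left]
  decide

lemma tm_add_two_ne_of_eq {k : ℕ} (h : tm (k + 1) = tm k) : tm (k + 2) ≠ tm (k + 1) := by
  rcases Nat.even_or_odd k with hk | hk
  · exact absurd h (tm_add_one_ne_of_even hk)
  · exact tm_add_one_ne_of_even hk.add_one

lemma tm_add_three_eq_of_odd {j : ℕ} (hj : Odd j) (h : tm (j + 1) ≠ tm j) :
    tm (j + 3) = tm (j + 2) := by
  obtain ⟨m, rfl⟩ := hj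
  have hj1 : tm (2 * m + 1 + 1) = tm (m + 1) := by
    rw [show 2 * m + 1 + 1 = 2 * (m + 1) by ring, tm_two_mul]
  have hj2 : tm (2 * m + 1 + 2) = tm (m + 1) + 1 := by
    rw [show 2 * m + 1 + 2 = 2 * (m + 1) + 1 by ring, tm_two_mul_add_one]
  have hj3 : tm (2 * m + 1 + 3) = tm (m + 2) := by
    rw [show 2 * m + 1 + 3 = 2 * (m + 2) by ring, tm_two_mul]
  rw [hj1, tm_two_mul_add_one, fin_two_ne_add_one_iff] at h
  rw [hj2, hj3]
  by_contra h'
  exact tm_add_two_ne_of_eq h ((fin_two_ne_add_one_iff _ _).mp h')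

lemma even_of_even_of_tm_eq {i j : ℕ} (hi : Even i) (h : ∀ k < 4, tm (i + k) = tm (j + k)) :
    Even j := by
  by_contra hj
  have h0 : tm i = tm j := by simpa using h 0 (by norm_num)
  have h01 : tm (j + 1) ≠ tm j := by
    rw [← h 1 (by norm_num), ← h0]
    exact tm_add_one_ne_of_even hi
  have h23 : tm (j + 3) ≠ tm (j + 2) := by
    rw [← h 2 (by norm_num), ← h 3 (by norm_num)]
    exact tm_add_one_ne_of_even (hi.add even_two)
  exact h23 (tm_add_three_eq_of_odd (Nat.not_even_iff_odd.mp hj) h01)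

theorem thueMorse_factor_positions_same_parity (n : ℕ) (hn : 4 ≤ n)
    (w : ℕ → Fin 2) (i j : ℕ)
    (hi : ∀ k < n, w k = tm (i + k)) (hj : ∀ k < n, w k = tm (j + k)) :
    i % 2 = j % 2 := by
  have h : ∀ k < 4, tm (i + k) = tm (j + k) := fun k hk =>
    (hi k (by omega)).symm.trans (hj k (by omega))
  have hparity : Even i ↔ Even j :=
    ⟨fun hi => even_of_even_of_tm_eq hi h,
      fun hj => even_of_even_of_tm_eq hj fun k hk => (h k hk).symm⟩
  rw [Nat.even_iff, Nat.even_iff] at hparity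
  omega
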